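/- arXiv:2605.23318 — 5 statements merged into one kernel-verified Lean document; each statement's English description precedes it below -/
import Mathlib

section
/- Let n ≥ 1, p ≥ 1, let (X_i, Y_i) ∈ ℝ^p × ℝ, i = 1,…,n, be arbitrary data points, and let the score vector a(1),…,a(n) ∈ ℝ be nondecreasing, i.e., a(1) ≤ a(2) ≤ ⋯ ≤ a(n). Then the generalized rank regression loss L : ℝ^p → ℝ is a convex function. -/
open scoped RealInnerProductSpace

/-!
By the rearrangement inequality, pairing a nondecreasing score vector with the sorted residual
vector `z` maximizes `∑ i, a i * z (σ i)` over all permutations `σ`. So `z ↦ ∑ i, a i * z₍ᵢ₎` is a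
maximum of finitely many linear functions, hence convex, and the loss is its composition with the
affine map `β ↦ Y - (⟪X j, β⟫)ⱼ`.
-/

/-- The generalized rank regression loss: residuals `Y i - ⟪X i, β⟫` are sorted in
nondecreasing order and weighted by the scores `a i`. -/
noncomputable def GRRLoss {n p : ℕ} (X : Fin n → EuclideanSpace ℝ (Fin p))
    (Y : Fin n → ℝ) (a : Fin n → ℝ) (β : EuclideanSpace ℝ (Fin p)) : ℝ :=
  ∑ i : Fin n,
    a i * ((fun j : Fin n => Y j - ⟪X j, β⟫) ∘
      Tuple.sort (fun j : Fin n => Y j - ⟪X j, β⟫)) i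

theorem ConvexOn.finset_sup' {𝕜 E β ι : Type*} [Semiring 𝕜] [PartialOrder 𝕜]
    [AddCommMonoid E] [AddCommMonoid β] [LinearOrder β] [IsOrderedAddMonoid β]
    [SMul 𝕜 E] [Module 𝕜 β] [PosSMulStrictMono 𝕜 β] {s : Set E}
    {t : Finset ι} (ht : t.Nonempty) {f : ι → E → β} (hf : ∀ i ∈ t, ConvexOn 𝕜 s (f i)) :
    ConvexOn 𝕜 s fun x => t.sup' ht fun i => f i x := by
  induction ht using Finset.Nonempty.cons_induction with
  | singleton i => simpa using hf i (by simp)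
  | cons i t hi ht ih =>
    simp only [Finset.sup'_cons ht]
    exact (hf i (by simp)).sup (ih fun j hj => hf j (Finset.mem_cons_of_mem hj))

theorem Monotone.sum_mul_comp_sort_eq_sup' {n : ℕ} {α : Type*} [CommSemiring α] [LinearOrder α]
    [IsStrictOrderedRing α] [ExistsAddOfLE α] {a : Fin n → α} (ha : Monotone a) (z : Fin n → α) :
    ∑ i, a i * z (Tuple.sort z i) =
      Finset.univ.sup' Finset.univ_nonempty fun σ : Equiv.Perm (Fin n) => ∑ i, a i * z (σ i) := by
  refine le_antisymm (Finset.le_sup' (fun σ : Equiv.Perm (Fin n) => ∑ i, a i * z (σ i))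
    (Finset.mem_univ _)) (Finset.sup'_le _ _ fun σ _ => ?_)
  have hmonovary : Monovary a (z ∘ Tuple.sort z) := ha.monovary (Tuple.monotone_sort z)
  simpa [Equiv.Perm.mul_apply] using
    hmonovary.sum_mul_comp_perm_le_sum_mul (σ := (Tuple.sort z)⁻¹ * σ)

theorem Monotone.convexOn_sum_mul_comp_sort {n : ℕ} {𝕜 : Type*} [Field 𝕜] [LinearOrder 𝕜]
    [IsStrictOrderedRing 𝕜] {a : Fin n → 𝕜} (ha : Monotone a) :
    ConvexOn 𝕜 Set.univ fun z : Fin n → 𝕜 => ∑ i, a i * z (Tuple.sort z i) := by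
  simp_rw [ha.sum_mul_comp_sort_eq_sup']
  refine ConvexOn.finset_sup' _ fun σ _ => ?_
  have hlinear : (fun z : Fin n → 𝕜 => ∑ i, a i * z (σ i)) =
      ⇑(∑ i, a i • LinearMap.proj (R := 𝕜) (φ := fun _ : Fin n => 𝕜) (σ i)) := by
    funext z
    simp
  exact hlinear ▸ LinearMap.convexOn _ convex_univ

theorem grr_loss_convex_of_monotone_score_general {n p : ℕ}
    (X : Fin n → EuclideanSpace ℝ (Fin p)) (Y : Fin n → ℝ)
    (a : Fin n → ℝ) (ha : Monotone a) :
    ConvexOn ℝ Set.univ (GRRLoss X Y a) := by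
  let residual : EuclideanSpace ℝ (Fin p) →ᵃ[ℝ] Fin n → ℝ :=
    AffineMap.const ℝ _ Y - (LinearMap.pi fun j => innerₛₗ ℝ (X j)).toAffineMap
  have hloss : GRRLoss X Y a = (fun z => ∑ i, a i * z (Tuple.sort z i)) ∘ residual := rfl
  rw [hloss]
  exact ha.convexOn_sum_mul_comp_sort.comp_affineMap residual

/-- Sufficiency direction of Proposition 1: if the score vector is nondecreasing,
then the GRR loss is convex. -/
theorem grr_loss_convex_of_monotone_score {n p : ℕ} (hn : 1 ≤ n) (hp : 1 ≤ p)
    (X : Fin n → EuclideanSpace ℝ (Fin p)) (Y : Fin n → ℝ)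
    (a : Fin n → ℝ) (ha : Monotone a) :
    ConvexOn ℝ Set.univ (GRRLoss X Y a) :=
  grr_loss_convex_of_monotone_score_general X Y a ha
end

section
/- Let n ≥ 2 and suppose the score vector a(1),…,a(n) ∈ ℝ is not nondecreasing, i.e., there exist indices i < j with a(i) > a(j). Then for every p ≥ 1 there exist data points (X_1, Y_1),…,(X_n, Y_n) ∈ ℝ^p × ℝ such that the generalized rank regression loss L : ℝ^p → ℝ is not convex. -/
/-!
A descent of the scores can be taken adjacent, `a (i + 1) < a i`. Along the line `β = t • e₁`,
choose data whose residuals are `(0, 1, …, i + t, i + 1 - t, …, n - 1)`. At `t = 0` and `t = 1`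
the sorted residuals coincide, so the loss takes the same value there; on `[0, 1/2]` no reordering
happens and the loss grows linearly with slope `a i - a (i + 1) > 0`. So the value at `t = 1/2`
exceeds the average of the values at the endpoints.
-/

open scoped RealInnerProductSpace

namespace Fin

variable {n : ℕ}

lemma exists_succ_lt_of_not_monotone {α : Type*} [LinearOrder α] {f : Fin n → α}
    (hf : ¬ Monotone f) : ∃ i j : Fin n, (j : ℕ) = i + 1 ∧ f j < f i := by
  cases n with
  | zero => exact absurd (fun i => i.elim0) hf
  | succ n =>
    obtain ⟨k, hk⟩ := not_forall.1 (mt Fin.monotone_iff_le_succ.2 hf)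
    exact ⟨k.castSucc, k.succ, rfl, lt_of_not_ge hk⟩

lemma monotone_of_abs_sub_le_half {f : Fin n → ℝ} (hf : ∀ k, |f k - (k : ℕ)| ≤ 1 / 2) :
    Monotone f := by
  refine monotone_iff_forall_lt.2 fun j k hjk => ?_
  have hjk : (j : ℝ) + 1 ≤ k := by exact_mod_cast hjk
  linarith [(abs_le.1 (hf j)).2, (abs_le.1 (hf k)).1]

end Fin

section SortedWeightedSum

variable {n : ℕ}

noncomputable def sortedWeightedSum (a r : Fin n → ℝ) : ℝ :=
  ∑ i, a i * (r ∘ Tuple.sort r) i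

lemma GRRLoss_eq_sortedWeightedSum {p : ℕ} (X : Fin n → EuclideanSpace ℝ (Fin p))
    (Y a : Fin n → ℝ) (β : EuclideanSpace ℝ (Fin p)) :
    GRRLoss X Y a β = sortedWeightedSum a (fun j => Y j - ⟪X j, β⟫) :=
  rfl

lemma sortedWeightedSum_of_monotone (a : Fin n → ℝ) {r : Fin n → ℝ} (hr : Monotone r) :
    sortedWeightedSum a r = ∑ i, a i * r i := by
  have hsort : r ∘ Tuple.sort r = r :=
    (Tuple.comp_sort_eq_comp_iff_monotone (σ := 1)).2 hr |>.symm
  simp only [sortedWeightedSum, hsort]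

lemma sortedWeightedSum_comp_perm (a r : Fin n → ℝ) (σ : Equiv.Perm (Fin n)) :
    sortedWeightedSum a (r ∘ σ) = sortedWeightedSum a r := by
  simp only [sortedWeightedSum, Tuple.comp_perm_comp_sort_eq_comp_sort]

end SortedWeightedSum

section SwapPath

variable {n : ℕ}

def swapPath (i j : Fin n) (t : ℝ) (k : Fin n) : ℝ :=
  (k : ℕ) + t * (Pi.single i 1 - Pi.single j 1 : Fin n → ℝ) k

lemma swapPath_zero (i j : Fin n) : swapPath i j 0 = fun k : Fin n => ((k : ℕ) : ℝ) := by
  funext k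
  simp [swapPath]

lemma swapPath_one {i j : Fin n} (hij : (j : ℕ) = i + 1) :
    swapPath i j 1 = (fun k : Fin n => ((k : ℕ) : ℝ)) ∘ Equiv.swap i j := by
  have hne : i ≠ j := fun h => by simp [h] at hij
  funext k
  rcases eq_or_ne k i with rfl | hki
  · simp [swapPath, hne, hij]
  rcases eq_or_ne k j with rfl | hkj
  · simp [swapPath, hne.symm, hij]
  · simp [swapPath, hki, hkj, Equiv.swap_apply_of_ne_of_ne]

lemma monotone_swapPath (i j : Fin n) {t : ℝ} (ht : |t| ≤ 1 / 2) :
    Monotone (swapPath i j t) := by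
  refine Fin.monotone_of_abs_sub_le_half fun k => ?_
  have hsingle : |(Pi.single i 1 - Pi.single j 1 : Fin n → ℝ) k| ≤ 1 := by
    rcases eq_or_ne k i with rfl | hki <;> rcases eq_or_ne k j with rfl | hkj <;>
      simp [*]
  calc |swapPath i j t k - (k : ℕ)|
    _ = |t| * |(Pi.single i 1 - Pi.single j 1 : Fin n → ℝ) k| := by
      rw [swapPath, add_sub_cancel_left, abs_mul]
    _ ≤ 1 / 2 * 1 := mul_le_mul ht hsingle (abs_nonneg _) (by norm_num)
    _ = 1 / 2 := mul_one _

lemma sum_mul_swapPath (a : Fin n → ℝ) (i j : Fin n) (t : ℝ) :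
    ∑ k, a k * swapPath i j t k = ∑ k, a k * (k : ℕ) + t * (a i - a j) := by
  simp [swapPath, mul_add, mul_sub, Finset.sum_add_distrib, Finset.sum_sub_distrib,
    Pi.single_apply]
  ring

lemma not_convexOn_sortedWeightedSum_swapPath {a : Fin n → ℝ} {i j : Fin n}
    (hij : (j : ℕ) = i + 1) (ha : a j < a i) :
    ¬ ConvexOn ℝ Set.univ (fun t => sortedWeightedSum a (swapPath i j t)) := by
  intro hconv
  have hmid := hconv.2 (Set.mem_univ 0) (Set.mem_univ 1) (by norm_num : (0 : ℝ) ≤ 1 / 2)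
    (by norm_num : (0 : ℝ) ≤ 1 / 2) (by norm_num)
  have hends : sortedWeightedSum a (swapPath i j 1) = sortedWeightedSum a (swapPath i j 0) := by
    rw [swapPath_one hij, sortedWeightedSum_comp_perm, swapPath_zero]
  have hhalf : sortedWeightedSum a (swapPath i j (1 / 2)) =
      sortedWeightedSum a (swapPath i j 0) + (a i - a j) / 2 := by
    rw [sortedWeightedSum_of_monotone a (monotone_swapPath i j (by norm_num)),
      sortedWeightedSum_of_monotone a (monotone_swapPath i j (by simp)),
      sum_mul_swapPath, sum_mul_swapPath]
    ring
  norm_num [smul_eq_mul] at hmid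
  linarith

end SwapPath

lemma GRRLoss_smul_of_norm_eq_one {n p : ℕ} (c Y a : Fin n → ℝ)
    {e : EuclideanSpace ℝ (Fin p)} (he : ‖e‖ = 1) (t : ℝ) :
    GRRLoss (fun k => c k • e) Y a (t • e) = sortedWeightedSum a (fun k => Y k - t * c k) := by
  simp [GRRLoss_eq_sortedWeightedSum, real_inner_smul_left, real_inner_smul_right, he]

theorem grr_loss_nonconvex_of_nonmonotone_score_general {n : ℕ}
    (a : Fin n → ℝ) (ha : ∃ i j : Fin n, i < j ∧ a j < a i) :
    ∀ p : ℕ, 1 ≤ p →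
      ∃ (X : Fin n → EuclideanSpace ℝ (Fin p)) (Y : Fin n → ℝ),
        ¬ ConvexOn ℝ Set.univ (GRRLoss X Y a) := by
  intro p hp
  have hnotMono : ¬ Monotone a := fun hmono => by
    obtain ⟨i, j, hlt, hgt⟩ := ha
    exact (hmono hlt.le).not_gt hgt
  obtain ⟨i, j, hij, hdesc⟩ := Fin.exists_succ_lt_of_not_monotone hnotMono
  let e : EuclideanSpace ℝ (Fin p) := EuclideanSpace.single ⟨0, hp⟩ 1
  have he : ‖e‖ = 1 := by simp [e]
  let X : Fin n → EuclideanSpace ℝ (Fin p) :=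
    fun k => (Pi.single j 1 - Pi.single i 1 : Fin n → ℝ) k • e
  let Y : Fin n → ℝ := fun k => (k : ℕ)
  refine ⟨X, Y, fun hconv => not_convexOn_sortedWeightedSum_swapPath hij hdesc ?_⟩
  have hline : (fun t => sortedWeightedSum a (swapPath i j t)) =
      GRRLoss X Y a ∘ LinearMap.toSpanSingleton ℝ _ e := by
    funext t
    rw [Function.comp_apply, LinearMap.toSpanSingleton_apply,
      GRRLoss_smul_of_norm_eq_one _ _ _ he]
    congr 1
    funext k
    simp only [swapPath, Y, Pi.sub_apply]
    ring
  rw [hline, ← Set.preimage_univ]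
  exact hconv.comp_linearMap _

/-- Necessity direction of Proposition 1: if the score vector is not nondecreasing,
then for every dimension `p ≥ 1` there are data points making the GRR loss non-convex. -/
theorem grr_loss_nonconvex_of_nonmonotone_score {n : ℕ} (hn : 2 ≤ n)
    (a : Fin n → ℝ) (ha : ∃ i j : Fin n, i < j ∧ a j < a i) :
    ∀ p : ℕ, 1 ≤ p →
      ∃ (X : Fin n → EuclideanSpace ℝ (Fin p)) (Y : Fin n → ℝ),
        ¬ ConvexOn ℝ Set.univ (GRRLoss X Y a) :=
  grr_loss_nonconvex_of_nonmonotone_score_general a ha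
end

section
/- Let φ : [0,1] → ℝ be continuously differentiable. Then ∫₀¹∫₀¹ (min(u,v) − u·v)·φ′(u)·φ′(v) du dv = ∫₀¹ φ(u)² du − (∫₀¹ φ(u) du)². In particular, if ∫₀¹ φ(u) du = 0 and ∫₀¹ φ(u)² du = 1, then ∫₀¹∫₀¹ min(u,v)·(1 − max(u,v))·φ′(u)·φ′(v) du dv = 1. -/
/-!
The kernel `min(u,v) − uv` is the Green function of `−d²/du²` on `[0,1]` with Dirichlet
conditions, so integrating it against `φ'` produces `G(u) = u ∫₀¹ φ − ∫₀ᵘ φ`, which vanishes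
at both endpoints and has `G' = ∫₀¹ φ − φ`. One more integration by parts turns
`∫₀¹ G φ'` into `∫₀¹ (φ − ∫₀¹ φ) φ = ∫₀¹ φ² − (∫₀¹ φ)²`.
-/

open Set intervalIntegral

theorem min_mul_one_sub_max (u v : ℝ) : min u v * (1 - max u v) = min u v - u * v := by
  linear_combination -min_mul_max u v

namespace BrownianBridge

variable {φ φ' : ℝ → ℝ}

theorem hasDerivAt_mul_const_sub_integral (hφ : Continuous φ) (C x : ℝ) :
    HasDerivAt (fun u => u * C - ∫ t in (0 : ℝ)..u, φ t) (C - φ x) x := by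
  have hlin : HasDerivAt (fun u : ℝ => u * C) C x := by
    simpa using (hasDerivAt_id x).mul_const C
  exact hlin.sub <| integral_hasDerivAt_right (hφ.intervalIntegrable _ _)
    (hφ.stronglyMeasurableAtFilter _ _) hφ.continuousAt

variable (hφ : ∀ x, HasDerivAt φ (φ' x) x) (hφ' : IntervalIntegrable φ' MeasureTheory.volume 0 1)
include hφ hφ'

theorem integral_min_sub_mul_mul_deriv {u : ℝ} (hu : u ∈ Icc (0 : ℝ) 1) :
    ∫ v in (0 : ℝ)..1, (min u v - u * v) * φ' v
      = u * (∫ v in (0 : ℝ)..1, φ v) - ∫ v in (0 : ℝ)..u, φ v := by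
  obtain ⟨hu0, hu1⟩ := hu
  have hφc : Continuous φ := continuous_iff_continuousAt.2 fun x => (hφ x).continuousAt
  have hφ'_left : IntervalIntegrable φ' MeasureTheory.volume 0 u :=
    hφ'.mono_set (uIcc_subset_uIcc_left (by simp [uIcc_of_le, hu0, hu1]))
  have hφ'_right : IntervalIntegrable φ' MeasureTheory.volume u 1 :=
    hφ'.mono_set (uIcc_subset_uIcc_right (by simp [uIcc_of_le, hu0, hu1]))
  have hleft : ∫ v in (0 : ℝ)..u, (min u v - u * v) * φ' v
      = (1 - u) * (u * φ u - ∫ v in (0 : ℝ)..u, φ v) := by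
    have hker : EqOn (fun v => (min u v - u * v) * φ' v) (fun v => (1 - u) * (v * φ' v))
        (uIcc 0 u) := by
      intro v hv
      rw [uIcc_of_le hu0] at hv
      simp only [min_eq_right hv.2]
      ring
    rw [integral_congr hker, integral_const_mul, integral_mul_deriv_eq_deriv_mul
      (fun x _ => hasDerivAt_id' x) (fun x _ => hφ x) intervalIntegrable_const hφ'_left]
    simp
  have hright : ∫ v in u..1, (min u v - u * v) * φ' v
      = u * ((∫ v in u..1, φ v) - (1 - u) * φ u) := by
    have hker : EqOn (fun v => (min u v - u * v) * φ' v) (fun v => u * ((1 - v) * φ' v))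
        (uIcc u 1) := by
      intro v hv
      rw [uIcc_of_le hu1] at hv
      simp only [min_eq_left hv.1]
      ring
    rw [integral_congr hker, integral_const_mul, integral_mul_deriv_eq_deriv_mul
      (fun x _ => (hasDerivAt_id' x).const_sub 1) (fun x _ => hφ x) intervalIntegrable_const
      hφ'_right, integral_const_mul]
    ring
  have hker : Continuous fun v => min u v - u * v := by fun_prop
  rw [← integral_add_adjacent_intervals (hφ'_left.continuousOn_mul hker.continuousOn)
    (hφ'_right.continuousOn_mul hker.continuousOn), hleft, hright,
    ← integral_add_adjacent_intervals (hφc.intervalIntegrable 0 u) (hφc.intervalIntegrable u 1)]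
  ring

theorem integral_integral_min_sub_mul_mul_deriv_mul_deriv :
    ∫ u in (0 : ℝ)..1, ∫ v in (0 : ℝ)..1, (min u v - u * v) * φ' u * φ' v
      = (∫ u in (0 : ℝ)..1, φ u ^ 2) - (∫ u in (0 : ℝ)..1, φ u) ^ 2 := by
  have hφc : Continuous φ := continuous_iff_continuousAt.2 fun x => (hφ x).continuousAt
  set C := ∫ u in (0 : ℝ)..1, φ u with hC
  have hinner : EqOn (fun u => ∫ v in (0 : ℝ)..1, (min u v - u * v) * φ' u * φ' v)
      (fun u => (u * C - ∫ t in (0 : ℝ)..u, φ t) * φ' u) (uIcc 0 1) := by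
    intro u hu
    rw [uIcc_of_le zero_le_one] at hu
    simp only [mul_right_comm _ (φ' u), integral_mul_const,
      integral_min_sub_mul_mul_deriv hφ hφ' hu, ← hC]
  rw [integral_congr hinner, integral_mul_deriv_eq_deriv_mul
    (fun x _ => hasDerivAt_mul_const_sub_integral hφc C x) (fun x _ => hφ x)
    ((continuous_const.sub hφc).intervalIntegrable _ _) hφ']
  simp only [sub_mul, integral_same, ← hC, ← sq]
  rw [integral_sub (f := fun x => C * φ x) (g := fun x => φ x ^ 2)
    ((continuous_const.mul hφc).intervalIntegrable _ _)
    ((hφc.pow 2).intervalIntegrable _ _), integral_const_mul, ← hC]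
  ring

end BrownianBridge

/-- Brownian-bridge covariance identity (numerator computation in the proof of
Proposition 3): for continuously differentiable `φ`,
`∫₀¹∫₀¹ (min(u,v) − uv) φ'(u) φ'(v) du dv = ∫₀¹ φ² − (∫₀¹ φ)²`; in particular, under
the normalization `∫₀¹ φ = 0`, `∫₀¹ φ² = 1`, the quadratic form with kernel
`min(u,v)(1 − max(u,v))` equals `1`. -/
theorem brownian_bridge_quadratic_form (φ : ℝ → ℝ) (hφ : ContDiff ℝ 1 φ) :
    (∫ u in (0:ℝ)..1, ∫ v in (0:ℝ)..1,
        (min u v - u * v) * deriv φ u * deriv φ v)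
      = (∫ u in (0:ℝ)..1, (φ u) ^ 2) - (∫ u in (0:ℝ)..1, φ u) ^ 2 ∧
    ((∫ u in (0:ℝ)..1, φ u) = 0 → (∫ u in (0:ℝ)..1, (φ u) ^ 2) = 1 →
      (∫ u in (0:ℝ)..1, ∫ v in (0:ℝ)..1,
          min u v * (1 - max u v) * deriv φ u * deriv φ v) = 1) := by
  have key := BrownianBridge.integral_integral_min_sub_mul_mul_deriv_mul_deriv
    (fun x => (hφ.differentiable one_ne_zero x).hasDerivAt)
    ((hφ.continuous_deriv le_rfl).intervalIntegrable 0 1)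
  refine ⟨key, fun hmean hsq => ?_⟩
  simp_rw [min_mul_one_sub_max, key, hmean, hsq]
  norm_num
end

section
/- Let φ : [0,1] → ℝ be continuously differentiable with ∫₀¹ φ(u) du = 0 and ∫₀¹ φ(u)² du = 1. Let f be a positive, bounded, continuously differentiable probability density on ℝ with strictly increasing cumulative distribution function F, f(x) → 0 as x → ±∞, f′ integrable, and assume c_H(φ) = −∫_ℝ φ(F(x)) f′(x) dx > 0. For each integer K ≥ 2 set τ_i = i/K for i = 1,…,K−1 and weights w_i = φ(i/K) − φ((i−1)/K). Then the composite-quantile-regression variance factor V_K := [ Σ_{i,j=1}^{K−1} w_i w_j · min(τ_i,τ_j)·(1 − max(τ_i,τ_j)) ] / [ Σ_{i=1}^{K−1} w_i · f(F⁻¹(τ_i)) ]² converges to 1/c_H(φ)² as K → ∞. -/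
/-!
The weights are the increments of `φ` on the grid `i / K`, so the denominator is a
Riemann–Stieltjes sum for `∫₀¹ φ'(u) f(F⁻¹(u)) du`; substituting `u = F x` and integrating by
parts turns this integral into `c`. For the numerator, let `J` be uniform on `{0, …, K - 1}`:
then `φ(J/K) - φ(0) = ∑ᵢ wᵢ 1{i ≤ J}`, and the indicators `1{i ≤ J}`, `1{j ≤ J}` have
covariance `min(τᵢ, τⱼ)(1 - max(τᵢ, τⱼ))`. Hence the numerator is the variance of `φ(J/K)`,
a difference of Riemann sums converging to `∫₀¹ φ² - (∫₀¹ φ)² = 1`.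
-/

open MeasureTheory Filter Topology Finset

lemma norm_integral_mul_sub_integral_mul_le {p q : ℝ → ℝ} (hp : Continuous p)
    (hq : Continuous q) {a b t M η : ℝ} (hab : a ≤ b) (hpM : ∀ u ∈ Set.Icc a b, ‖p u‖ ≤ M)
    (hqη : ∀ u ∈ Set.Icc a b, ‖q t - q u‖ ≤ η) :
    ‖(∫ u in a..b, p u) * q t - ∫ u in a..b, p u * q u‖ ≤ M * η * (b - a) := by
  have hsub : (∫ u in a..b, p u) * q t - ∫ u in a..b, p u * q u
      = ∫ u in a..b, p u * (q t - q u) := by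
    have hpt : IntervalIntegrable (fun u => p u * q t) volume a b :=
      (hp.mul continuous_const).intervalIntegrable _ _
    have hpq : IntervalIntegrable (fun u => p u * q u) volume a b :=
      (hp.mul hq).intervalIntegrable _ _
    rw [← intervalIntegral.integral_mul_const, ← intervalIntegral.integral_sub hpt hpq]
    simp only [mul_sub]
  rw [hsub, ← abs_of_nonneg (sub_nonneg.2 hab)]
  refine intervalIntegral.norm_integral_le_of_norm_le_const fun u hu => ?_
  rw [Set.uIoc_of_le hab] at hu
  have hu' := Set.Ioc_subset_Icc_self hu
  rw [norm_mul]
  exact mul_le_mul (hpM u hu') (hqη u hu') (norm_nonneg _) ((norm_nonneg _).trans (hpM u hu'))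

lemma integral_eq_sum_range_integral {g : ℝ → ℝ} (hg : Continuous g) {n : ℕ} (hn : n ≠ 0) :
    ∫ u in (0 : ℝ)..1, g u = ∑ j ∈ range n, ∫ u in (j : ℝ) / n..(j + 1) / n, g u := by
  have := intervalIntegral.sum_integral_adjacent_intervals (a := fun j : ℕ => (j : ℝ) / n)
    (n := n) (μ := volume) fun k _ => hg.intervalIntegrable _ _
  simp only [Nat.cast_add, Nat.cast_one, Nat.cast_zero, zero_div,
    div_self (Nat.cast_ne_zero.2 hn : (n : ℝ) ≠ 0)] at this
  exact this.symm

theorem tendsto_sum_integral_mul_of_mem_Icc {p q : ℝ → ℝ} (hp : Continuous p)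
    (hq : Continuous q) {t : ℕ → ℕ → ℝ}
    (ht : ∀ n j : ℕ, j < n → t n j ∈ Set.Icc ((j : ℝ) / n) ((j + 1) / n)) :
    Tendsto (fun n : ℕ => ∑ j ∈ range n, (∫ u in (j : ℝ) / n..(j + 1) / n, p u) * q (t n j))
      atTop (𝓝 (∫ u in (0 : ℝ)..1, p u * q u)) := by
  obtain ⟨M, hM⟩ := isCompact_Icc.exists_bound_of_continuousOn (hp.continuousOn (s := Set.Icc 0 1))
  have hM0 : 0 ≤ M := (norm_nonneg _).trans (hM 0 (by norm_num))
  rw [Metric.tendsto_atTop]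
  intro ε hε
  set η := ε / (2 * (M + 1))
  obtain ⟨δ, hδ, hqδ⟩ := Metric.uniformContinuousOn_iff.1
    (isCompact_Icc.uniformContinuousOn_of_continuous (hq.continuousOn (s := Set.Icc 0 1))) η
    (by positivity)
  obtain ⟨N, hN⟩ := exists_nat_gt (1 / δ)
  refine ⟨N + 1, fun n hn => ?_⟩
  have hn0 : (0 : ℝ) < n := by norm_cast; omega
  have hmesh : 1 / (n : ℝ) < δ := by
    rw [div_lt_iff₀ hn0]
    rw [div_lt_iff₀ hδ] at hN
    have : (N : ℝ) + 1 ≤ n := by exact_mod_cast hn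
    nlinarith
  have hterm : ∀ j ∈ range n, ‖(∫ u in (j : ℝ) / n..(j + 1) / n, p u) * q (t n j)
      - ∫ u in (j : ℝ) / n..(j + 1) / n, p u * q u‖ ≤ M * η * (1 / n) := by
    intro j hj
    have hjn : (j : ℝ) + 1 ≤ n := by exact_mod_cast Nat.succ_le_of_lt (mem_range.1 hj)
    have hsub : ∀ u ∈ Set.Icc ((j : ℝ) / n) ((j + 1) / n), u ∈ Set.Icc (0 : ℝ) 1 := fun u hu =>
      ⟨(by positivity : (0:ℝ) ≤ j / n).trans hu.1, hu.2.trans ((div_le_one hn0).2 hjn)⟩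
    have htj := ht n j (mem_range.1 hj)
    have hwidth : ((j : ℝ) + 1) / n - j / n = 1 / n := by field_simp; ring
    rw [← hwidth]
    refine norm_integral_mul_sub_integral_mul_le hp hq (htj.1.trans htj.2)
      (fun u hu => hM u (hsub u hu)) fun u hu => ?_
    rw [← dist_eq_norm]
    refine (hqδ _ (hsub _ htj) _ (hsub u hu) ?_).le
    calc dist (t n j) u ≤ ((j : ℝ) + 1) / n - j / n := Real.dist_le_of_mem_Icc htj hu
      _ < δ := hwidth ▸ hmesh
  rw [dist_eq_norm, integral_eq_sum_range_integral (g := fun u => p u * q u) (hp.mul hq)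
    (n := n) (by omega), ← sum_sub_distrib]
  calc _ ≤ ∑ j ∈ range n, M * η * (1 / n) := norm_sum_le_of_le _ hterm
    _ = M * η := by rw [sum_const, card_range, nsmul_eq_mul]; field_simp
    _ < ε := by
      rw [show M * η = ε * (M / (2 * (M + 1))) by ring]
      refine mul_lt_of_lt_one_right hε ?_
      rw [div_lt_one (by positivity)]
      linarith

theorem tendsto_sum_range_div {h : ℝ → ℝ} (hh : Continuous h) :
    Tendsto (fun n : ℕ => (∑ j ∈ range n, h (j / n)) / n) atTop (𝓝 (∫ u in (0 : ℝ)..1, h u)) := by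
  have := tendsto_sum_integral_mul_of_mem_Icc (p := fun _ => 1) continuous_const hh
    (t := fun n j => (j : ℝ) / n) fun n j _ => ⟨le_rfl, by gcongr; linarith⟩
  simp only [one_mul, intervalIntegral.integral_const, smul_eq_mul, mul_one] at this
  refine this.congr fun n => ?_
  rw [sum_div]
  exact sum_congr rfl fun j _ => by ring

theorem tendsto_sum_Icc_sub_mul {φ q : ℝ → ℝ} (hφ : ContDiff ℝ 1 φ) (hq : Continuous q)
    (hq_one : q 1 = 0) :
    Tendsto (fun K : ℕ => ∑ i ∈ Icc 1 (K - 1),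
        (φ ((i : ℝ) / K) - φ (((i : ℝ) - 1) / K)) * q ((i : ℝ) / K))
      atTop (𝓝 (∫ u in (0 : ℝ)..1, deriv φ u * q u)) := by
  have hφ' := hφ.continuous_deriv le_rfl
  have hRS := tendsto_sum_integral_mul_of_mem_Icc hφ' hq
    (t := fun n j => ((j : ℝ) + 1) / n) fun n j _ => ⟨by gcongr; linarith, le_rfl⟩
  rw [← tendsto_add_atTop_iff_nat 1] at hRS ⊢
  refine hRS.congr fun n => ?_
  have hlast : ((n : ℝ) + 1) / (n + 1 : ℕ) = 1 := by push_cast; exact div_self (by positivity)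
  rw [sum_range_succ, hlast, hq_one, mul_zero, add_zero, Nat.add_sub_cancel,
    ← Ico_add_one_right_eq_Icc, sum_Ico_eq_sum_range, Nat.add_sub_cancel]
  refine sum_congr rfl fun j _ => ?_
  rw [intervalIntegral.integral_deriv_eq_sub' φ rfl
    (fun x _ => hφ.differentiable one_ne_zero x) hφ'.continuousOn]
  push_cast
  ring_nf

lemma card_mul_sum_sq_sub_sq_sum_const_add {ι : Type*} (s : Finset ι) (x : ι → ℝ) (c : ℝ) :
    #s * ∑ i ∈ s, (c + x i) ^ 2 - (∑ i ∈ s, (c + x i)) ^ 2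
      = #s * ∑ i ∈ s, x i ^ 2 - (∑ i ∈ s, x i) ^ 2 := by
  simp only [add_sq, sum_add_distrib, sum_const, nsmul_eq_mul, ← mul_sum]
  ring

lemma card_mul_sum_sq_sub_sq_sum_sum_mul {ι κ : Type*} (r : Finset κ) (s : Finset ι)
    (w : ι → ℝ) (χ : ι → κ → ℝ) :
    #r * ∑ k ∈ r, (∑ i ∈ s, w i * χ i k) ^ 2 - (∑ k ∈ r, ∑ i ∈ s, w i * χ i k) ^ 2
      = ∑ i ∈ s, ∑ j ∈ s, w i * w j *
          (#r * ∑ k ∈ r, χ i k * χ j k - (∑ k ∈ r, χ i k) * ∑ k ∈ r, χ j k) := by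
  have hsq : ∀ k ∈ r, (∑ i ∈ s, w i * χ i k) ^ 2
      = ∑ i ∈ s, ∑ j ∈ s, w i * w j * (χ i k * χ j k) := fun k _ => by
    rw [sq, sum_mul_sum]
    exact sum_congr rfl fun i _ => sum_congr rfl fun j _ => by ring
  have hlin : ∑ k ∈ r, ∑ i ∈ s, w i * χ i k = ∑ i ∈ s, w i * ∑ k ∈ r, χ i k := by
    rw [sum_comm]
    simp only [mul_sum]
  rw [sum_congr rfl hsq, hlin, sq, sum_mul_sum, sum_comm, mul_sum, ← sum_sub_distrib]
  refine sum_congr rfl fun i _ => ?_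
  rw [sum_comm, mul_sum, ← sum_sub_distrib]
  refine sum_congr rfl fun j _ => ?_
  rw [← mul_sum]
  ring

lemma sum_range_ite_le (n m : ℕ) (hm : m ≤ n) :
    ∑ k ∈ range n, (if m ≤ k then (1 : ℝ) else 0) = n - m := by
  rw [sum_boole, show (range n).filter (m ≤ ·) = Ico m n by ext; simp; omega, Nat.card_Ico,
    Nat.cast_sub hm]

lemma sum_Icc_sub_mul_ite_le (a : ℕ → ℝ) (n k : ℕ) (hk : k ≤ n) :
    ∑ i ∈ Icc 1 n, (a i - a (i - 1)) * (if i ≤ k then 1 else 0) = a k - a 0 := by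
  simp only [mul_ite, mul_one, mul_zero]
  rw [← sum_filter, show (Icc 1 n).filter (· ≤ k) = Ico 1 (k + 1) by ext; simp; omega,
    sum_Ico_eq_sum_range, Nat.add_sub_cancel]
  simpa [add_comm 1] using sum_range_sub a k

lemma sum_sum_sub_mul_sub_mul_min_mul_sub_max (a : ℕ → ℝ) (n : ℕ) :
    ∑ i ∈ Icc 1 n, ∑ j ∈ Icc 1 n, (a i - a (i - 1)) * (a j - a (j - 1)) *
        (min (i : ℝ) j * (n + 1 - max (i : ℝ) j))
      = (n + 1) * ∑ k ∈ range (n + 1), a k ^ 2 - (∑ k ∈ range (n + 1), a k) ^ 2 := by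
  set χ : ℕ → ℕ → ℝ := fun i k => if i ≤ k then 1 else 0
  have htel : ∀ k ∈ range (n + 1), a k = a 0 + ∑ i ∈ Icc 1 n, (a i - a (i - 1)) * χ i k :=
    fun k hk => by rw [sum_Icc_sub_mul_ite_le a n k (Nat.lt_succ_iff.1 (mem_range.1 hk))]; ring
  have hχ : ∀ i j k, χ i k * χ j k = χ (max i j) k := fun i j k => by
    by_cases hi : i ≤ k <;> by_cases hj : j ≤ k <;> simp [χ, hi, hj]
  have hcard : ((n : ℝ) + 1) = #(range (n + 1)) := by simp
  conv_rhs => rw [sum_congr rfl fun k hk => congrArg (· ^ 2) (htel k hk), sum_congr rfl htel,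
    hcard, card_mul_sum_sq_sub_sq_sum_const_add, card_mul_sum_sq_sub_sq_sum_sum_mul]
  refine sum_congr rfl fun i hi => sum_congr rfl fun j hj => ?_
  rw [mem_Icc] at hi hj
  simp only [hχ, χ, card_range]
  rw [sum_range_ite_le _ _ (by omega), sum_range_ite_le _ _ (by omega),
    sum_range_ite_le _ _ (by omega)]
  push_cast
  linear_combination (a i - a (i - 1)) * (a j - a (j - 1)) *
    ((n + 1) * min_add_max (i : ℝ) j - min_mul_max (i : ℝ) j)

lemma sum_sum_sub_mul_sub_mul_min_div_mul_one_sub_max_div (a : ℕ → ℝ) (n : ℕ) :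
    ∑ i ∈ Icc 1 n, ∑ j ∈ Icc 1 n, (a i - a (i - 1)) * (a j - a (j - 1)) *
        (min ((i : ℝ) / (n + 1)) (j / (n + 1)) * (1 - max ((i : ℝ) / (n + 1)) (j / (n + 1))))
      = (∑ k ∈ range (n + 1), a k ^ 2) / (n + 1) - ((∑ k ∈ range (n + 1), a k) / (n + 1)) ^ 2 := by
  have hn : (0 : ℝ) < n + 1 := by positivity
  have hterm : ∀ x y : ℝ, min (x / (n + 1)) (y / (n + 1)) * (1 - max (x / (n + 1)) (y / (n + 1)))
      = min x y * (n + 1 - max x y) / (n + 1) ^ 2 := fun x y => by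
    rw [min_div_div_right hn.le, max_div_div_right hn.le]
    field_simp
  simp only [hterm, mul_div_assoc', ← sum_div, sum_sum_sub_mul_sub_mul_min_mul_sub_max]
  field_simp

theorem tendsto_cqr_numerator {φ : ℝ → ℝ} (hφ : Continuous φ)
    (hφ_mean : (∫ u in (0:ℝ)..1, φ u) = 0) (hφ_norm : (∫ u in (0:ℝ)..1, (φ u) ^ 2) = 1) :
    Tendsto (fun K : ℕ => ∑ i ∈ Icc 1 (K - 1), ∑ j ∈ Icc 1 (K - 1),
        (φ ((i : ℝ) / K) - φ (((i : ℝ) - 1) / K)) * (φ ((j : ℝ) / K) - φ (((j : ℝ) - 1) / K)) *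
          (min ((i : ℝ) / K) ((j : ℝ) / K) * (1 - max ((i : ℝ) / K) ((j : ℝ) / K))))
      atTop (𝓝 1) := by
  have hsq := (tendsto_sum_range_div (h := fun u => φ u ^ 2) (hφ.pow 2)).comp
    (tendsto_add_atTop_nat 1)
  have hmean := (tendsto_sum_range_div hφ).comp (tendsto_add_atTop_nat 1)
  rw [hφ_norm] at hsq
  rw [hφ_mean] at hmean
  have hvar := hsq.sub (hmean.pow 2)
  rw [zero_pow two_ne_zero, sub_zero] at hvar
  rw [← tendsto_add_atTop_iff_nat 1]
  refine hvar.congr fun n => ?_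
  simp only [Function.comp_apply, Nat.cast_add, Nat.cast_one, Nat.add_sub_cancel]
  rw [← sum_sum_sub_mul_sub_mul_min_div_mul_one_sub_max_div (fun k => φ (k / (n + 1)))]
  refine sum_congr rfl fun i hi => sum_congr rfl fun j hj => ?_
  rw [mem_Icc] at hi hj
  rw [Nat.cast_sub hi.1, Nat.cast_sub hj.1, Nat.cast_one]

noncomputable def densityQuantile (f F : ℝ → ℝ) : ℝ → ℝ :=
  (Set.Ioo 0 1).indicator (f ∘ Function.invFun F)

section Quantile

variable {F : ℝ → ℝ}

lemma apply_invFun_of_mem_Ioo (hF_range : Set.range F = Set.Ioo 0 1) {u : ℝ}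
    (hu : u ∈ Set.Ioo (0 : ℝ) 1) : F (Function.invFun F u) = u :=
  Function.invFun_eq (by rwa [← Set.mem_range, hF_range])

variable (hF_mono : StrictMono F) (hF_range : Set.range F = Set.Ioo 0 1)
include hF_mono hF_range

lemma monotoneOn_invFun : MonotoneOn (Function.invFun F) (Set.Ioo 0 1) := fun u hu v hv huv =>
  hF_mono.le_iff_le.1 <| by
    rwa [apply_invFun_of_mem_Ioo hF_range hu, apply_invFun_of_mem_Ioo hF_range hv]

lemma continuousOn_invFun : ContinuousOn (Function.invFun F) (Set.Ioo 0 1) := by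
  have himage : Function.invFun F '' Set.Ioo 0 1 = Set.univ :=
    Set.eq_univ_of_forall fun x => ⟨F x, hF_range ▸ Set.mem_range_self x,
      Function.leftInverse_invFun hF_mono.injective x⟩
  refine fun u hu => (continuousAt_of_monotoneOn_of_image_mem_nhds
    (monotoneOn_invFun hF_mono hF_range) (isOpen_Ioo.mem_nhds hu) ?_).continuousWithinAt
  simp [himage]

lemma tendsto_invFun_nhdsGT_zero : Tendsto (Function.invFun F) (𝓝[>] 0) atBot := by
  refine tendsto_atBot.2 fun b => ?_
  have hFb : F b ∈ Set.Ioo (0 : ℝ) 1 := hF_range ▸ Set.mem_range_self b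
  filter_upwards [Ioo_mem_nhdsGT hFb.1] with u hu
  refine hF_mono.le_iff_le.1 ?_
  rw [apply_invFun_of_mem_Ioo hF_range ⟨hu.1, hu.2.trans hFb.2⟩]
  exact hu.2.le

lemma tendsto_invFun_nhdsLT_one : Tendsto (Function.invFun F) (𝓝[<] 1) atTop := by
  refine tendsto_atTop.2 fun b => ?_
  have hFb : F b ∈ Set.Ioo (0 : ℝ) 1 := hF_range ▸ Set.mem_range_self b
  filter_upwards [Ioo_mem_nhdsLT hFb.2] with u hu
  refine hF_mono.le_iff_le.1 ?_
  rw [apply_invFun_of_mem_Ioo hF_range ⟨hFb.1.trans hu.1, hu.2⟩]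
  exact hu.1.le

lemma densityQuantile_comp (f : ℝ → ℝ) : densityQuantile f F ∘ F = f := funext fun x => by
  rw [Function.comp_apply, densityQuantile, Set.indicator_of_mem (hF_range ▸ Set.mem_range_self x),
    Function.comp_apply, Function.leftInverse_invFun hF_mono.injective x]

theorem continuous_densityQuantile {f : ℝ → ℝ} (hf : Continuous f)
    (hf_top : Tendsto f atTop (𝓝 0)) (hf_bot : Tendsto f atBot (𝓝 0)) :
    Continuous (densityQuantile f F) := by
  have hzero : ∀ u ∉ Set.Ioo (0 : ℝ) 1, densityQuantile f F u = 0 :=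
    fun u hu => Set.indicator_of_notMem hu _
  have hinner : Set.EqOn (densityQuantile f F) (f ∘ Function.invFun F) (Set.Ioo 0 1) :=
    fun u hu => Set.indicator_of_mem hu _
  refine continuous_iff_continuousAt.2 fun u => ?_
  by_cases hu : u ∈ Set.Ioo (0 : ℝ) 1
  · exact ((hf.continuousAt.comp ((continuousOn_invFun hF_mono hF_range).continuousAt
      (isOpen_Ioo.mem_nhds hu))).congr (hinner.eventuallyEq_of_mem (isOpen_Ioo.mem_nhds hu)).symm)
  rcases eq_or_ne u 0 with rfl | hu0
  · rw [continuousAt_iff_continuous_left_right, ← continuousWithinAt_Ioi_iff_Ici,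
      ContinuousWithinAt, ContinuousWithinAt, hzero 0 (by simp)]
    refine ⟨tendsto_const_nhds.congr' ?_, ?_⟩
    · filter_upwards [self_mem_nhdsWithin] with v hv
      exact (hzero v fun h => not_lt.2 hv h.1).symm
    · exact (hf_bot.comp (tendsto_invFun_nhdsGT_zero hF_mono hF_range)).congr'
        (hinner.eventuallyEq_of_mem (Ioo_mem_nhdsGT one_pos)).symm
  rcases eq_or_ne u 1 with rfl | hu1
  · rw [continuousAt_iff_continuous_left_right, ← continuousWithinAt_Iio_iff_Iic,
      ContinuousWithinAt, ContinuousWithinAt, hzero 1 (by simp)]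
    refine ⟨?_, tendsto_const_nhds.congr' ?_⟩
    · exact (hf_top.comp (tendsto_invFun_nhdsLT_one hF_mono hF_range)).congr'
        (hinner.eventuallyEq_of_mem (Ioo_mem_nhdsLT one_pos)).symm
    · filter_upwards [self_mem_nhdsWithin] with v hv
      exact (hzero v fun h => not_lt.2 hv h.2).symm
  · have hout : u ∉ Set.Icc (0 : ℝ) 1 := fun h =>
      hu ⟨lt_of_le_of_ne h.1 hu0.symm, lt_of_le_of_ne h.2 hu1⟩
    refine (continuousAt_const (y := (0 : ℝ))).congr ?_
    filter_upwards [isClosed_Icc.isOpen_compl.mem_nhds hout] with v hv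
    exact (hzero v fun h => hv (Set.Ioo_subset_Icc_self h)).symm

end Quantile

lemma integral_deriv_mul_eq_sub_integral_comp_mul_deriv {φ f F G : ℝ → ℝ} (hφ : ContDiff ℝ 1 φ)
    (hf : ContDiff ℝ 1 f) (hF_deriv : ∀ x, HasDerivAt F (f x) x) (hG : Continuous G)
    (hGF : ∀ x, G (F x) = f x) (a b : ℝ) :
    ∫ u in F a..F b, deriv φ u * G u
      = φ (F b) * f b - φ (F a) * f a - ∫ x in a..b, φ (F x) * deriv f x := by
  have hφ' : Continuous (deriv φ) := hφ.continuous_deriv le_rfl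
  have hparts := intervalIntegral.integral_mul_deriv_eq_deriv_mul (a := a) (b := b)
    (u := φ ∘ F) (v := f) (u' := fun x => deriv φ (F x) * f x)
    (fun x _ => ((hφ.differentiable one_ne_zero (F x)).hasDerivAt).comp x (hF_deriv x))
    (fun x _ => (hf.differentiable one_ne_zero x).hasDerivAt)
    (((hφ'.comp (continuous_iff_continuousAt.2 fun x => (hF_deriv x).continuousAt)).mul
      hf.continuous).intervalIntegrable _ _)
    ((hf.continuous_deriv le_rfl).intervalIntegrable _ _)
  rw [← intervalIntegral.integral_deriv_smul_comp (g := fun u => deriv φ u * G u)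
    (fun x _ => hF_deriv x) hf.continuous.continuousOn (hφ'.mul hG)]
  simp only [Function.comp_apply, smul_eq_mul, hGF] at hparts ⊢
  linarith [show ∫ x in a..b, f x * (deriv φ (F x) * f x)
    = ∫ x in a..b, deriv φ (F x) * f x * f x from
    intervalIntegral.integral_congr fun x _ => mul_comm _ _]

theorem integral_deriv_mul_densityQuantile {φ f F : ℝ → ℝ} (hφ : ContDiff ℝ 1 φ)
    (hf : ContDiff ℝ 1 f) (hF_mono : StrictMono F) (hF_range : Set.range F = Set.Ioo 0 1)
    (hF_deriv : ∀ x, HasDerivAt F (f x) x) (hf_top : Tendsto f atTop (𝓝 0))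
    (hf_bot : Tendsto f atBot (𝓝 0)) (hf'_int : Integrable (deriv f)) :
    ∫ u in (0 : ℝ)..1, deriv φ u * densityQuantile f F u = -∫ x, φ (F x) * deriv f x := by
  set H := fun u => deriv φ u * densityQuantile f F u
  have hH : Continuous H := (hφ.continuous_deriv le_rfl).mul
    (continuous_densityQuantile hF_mono hF_range hf.continuous hf_top hf_bot)
  have hF_top : Tendsto F atTop (𝓝 1) :=
    tendsto_atTop_isLUB hF_mono.monotone (hF_range ▸ isLUB_Ioo zero_lt_one)
  have hF_bot : Tendsto F atBot (𝓝 0) :=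
    tendsto_atBot_isGLB hF_mono.monotone (hF_range ▸ isGLB_Ioo zero_lt_one)
  have hneg : Tendsto (fun x : ℝ => -x) atTop atBot := tendsto_neg_atTop_atBot
  have hprim : Continuous fun t => ∫ u in (0 : ℝ)..t, H u :=
    intervalIntegral.continuous_primitive (fun _ _ => hH.intervalIntegrable _ _) 0
  have hlhs : Tendsto (fun x => ∫ u in F (-x)..F x, H u) atTop (𝓝 (∫ u in (0 : ℝ)..1, H u)) := by
    have := ((hprim.tendsto 1).comp hF_top).sub ((hprim.tendsto 0).comp (hF_bot.comp hneg))
    simp only [intervalIntegral.integral_same, sub_zero] at this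
    refine this.congr fun x => ?_
    exact intervalIntegral.integral_interval_sub_left (hH.intervalIntegrable _ _)
      (hH.intervalIntegrable _ _)
  obtain ⟨M, hM⟩ := isCompact_Icc.exists_bound_of_continuousOn
    (hφ.continuous.continuousOn (s := Set.Icc 0 1))
  have hint : Integrable fun x => φ (F x) * deriv f x := hf'_int.bdd_mul
    (hφ.continuous.comp (continuous_iff_continuousAt.2 fun x =>
      (hF_deriv x).continuousAt)).aestronglyMeasurable
    (ae_of_all _ fun x => hM _ (Set.Ioo_subset_Icc_self (hF_range ▸ Set.mem_range_self x)))
  have hboundary : ∀ l : Filter ℝ, ∀ a, Tendsto F l (𝓝 a) → Tendsto f l (𝓝 0) →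
      Tendsto (fun x => φ (F x) * f x) l (𝓝 0) := fun l a hFa hf0 => by
    simpa using ((hφ.continuous.tendsto a).comp hFa).mul hf0
  have hrhs := ((hboundary atTop 1 hF_top hf_top).sub
    ((hboundary atBot 0 hF_bot hf_bot).comp hneg)).sub
    (intervalIntegral_tendsto_integral hint hneg tendsto_id)
  rw [sub_zero, zero_sub] at hrhs
  refine tendsto_nhds_unique hlhs (hrhs.congr fun x => ?_)
  exact (integral_deriv_mul_eq_sub_integral_comp_mul_deriv hφ hf hF_deriv
    (continuous_densityQuantile hF_mono hF_range hf.continuous hf_top hf_bot)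
    (congrFun (densityQuantile_comp hF_mono hF_range f)) (-x) x).symm

theorem cqr_variance_tendsto_grr_variance_general
    (φ : ℝ → ℝ) (hφ : ContDiff ℝ 1 φ)
    (hφ_mean : (∫ u in (0:ℝ)..1, φ u) = 0)
    (hφ_norm : (∫ u in (0:ℝ)..1, (φ u) ^ 2) = 1)
    (f F : ℝ → ℝ)
    (hf_smooth : ContDiff ℝ 1 f)
    (hF_mono : StrictMono F)
    (hF_range : Set.range F = Set.Ioo (0:ℝ) 1)
    (hF_deriv : ∀ x, HasDerivAt F (f x) x)
    (hf_top : Filter.Tendsto f Filter.atTop (nhds 0))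
    (hf_bot : Filter.Tendsto f Filter.atBot (nhds 0))
    (hf'_int : Integrable (deriv f))
    (c : ℝ) (hc_def : c = -∫ x : ℝ, φ (F x) * deriv f x) (hc_pos : 0 < c) :
    Tendsto
      (fun K : ℕ =>
        (∑ i ∈ Finset.Icc 1 (K - 1), ∑ j ∈ Finset.Icc 1 (K - 1),
            (φ ((i : ℝ) / K) - φ (((i : ℝ) - 1) / K)) *
              (φ ((j : ℝ) / K) - φ (((j : ℝ) - 1) / K)) *
                (min ((i : ℝ) / K) ((j : ℝ) / K) *
                  (1 - max ((i : ℝ) / K) ((j : ℝ) / K)))) /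
          (∑ i ∈ Finset.Icc 1 (K - 1),
              (φ ((i : ℝ) / K) - φ (((i : ℝ) - 1) / K)) *
                f (Function.invFun F ((i : ℝ) / K))) ^ 2)
      atTop (nhds (1 / c ^ 2)) := by
  have hD := tendsto_sum_Icc_sub_mul hφ
    (continuous_densityQuantile hF_mono hF_range hf_smooth.continuous hf_top hf_bot)
    (Set.indicator_of_notMem (by simp) _)
  rw [integral_deriv_mul_densityQuantile hφ hf_smooth hF_mono hF_range hF_deriv hf_top hf_bot
    hf'_int, ← hc_def] at hD
  refine (tendsto_cqr_numerator hφ.continuous hφ_mean hφ_norm).div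
    ((hD.congr fun K => sum_congr rfl fun i hi => ?_).pow 2) (pow_pos hc_pos 2).ne'
  have hi' := mem_Icc.1 hi
  have hiK : (i : ℝ) < K := by exact_mod_cast (by omega : i < K)
  have hi0 : (0 : ℝ) < i := by exact_mod_cast hi'.1
  have hmem : (i : ℝ) / K ∈ Set.Ioo 0 1 :=
    ⟨div_pos hi0 (hi0.trans hiK), (div_lt_one (hi0.trans hiK)).2 hiK⟩
  rw [densityQuantile, Set.indicator_of_mem hmem, Function.comp_apply]

/-- Proposition 3: with quantile levels `τ_i = i/K` and weights
`w_i = φ(i/K) − φ((i−1)/K)`, the asymptotic variance factor of weighted composite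
quantile regression converges, as `K → ∞`, to the asymptotic variance factor
`1/c_H(φ)²` of generalized rank regression with score-generating function `φ`. -/
theorem cqr_variance_tendsto_grr_variance
    (φ : ℝ → ℝ) (hφ : ContDiff ℝ 1 φ)
    (hφ_mean : (∫ u in (0:ℝ)..1, φ u) = 0)
    (hφ_norm : (∫ u in (0:ℝ)..1, (φ u) ^ 2) = 1)
    (f F : ℝ → ℝ)
    (hf_pos : ∀ x, 0 < f x)
    (hf_bdd : BddAbove (Set.range f))
    (hf_smooth : ContDiff ℝ 1 f)
    (hF_mono : StrictMono F)
    (hF_range : Set.range F = Set.Ioo (0:ℝ) 1)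
    (hF_deriv : ∀ x, HasDerivAt F (f x) x)
    (hf_top : Filter.Tendsto f Filter.atTop (nhds 0))
    (hf_bot : Filter.Tendsto f Filter.atBot (nhds 0))
    (hf'_int : Integrable (deriv f))
    (c : ℝ) (hc_def : c = -∫ x : ℝ, φ (F x) * deriv f x) (hc_pos : 0 < c) :
    Tendsto
      (fun K : ℕ =>
        (∑ i ∈ Finset.Icc 1 (K - 1), ∑ j ∈ Finset.Icc 1 (K - 1),
            (φ ((i : ℝ) / K) - φ (((i : ℝ) - 1) / K)) *
              (φ ((j : ℝ) / K) - φ (((j : ℝ) - 1) / K)) *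
                (min ((i : ℝ) / K) ((j : ℝ) / K) *
                  (1 - max ((i : ℝ) / K) ((j : ℝ) / K)))) /
          (∑ i ∈ Finset.Icc 1 (K - 1),
              (φ ((i : ℝ) / K) - φ (((i : ℝ) - 1) / K)) *
                f (Function.invFun F ((i : ℝ) / K))) ^ 2)
      atTop (nhds (1 / c ^ 2)) :=
  cqr_variance_tendsto_grr_variance_general φ hφ hφ_mean hφ_norm f F hf_smooth hF_mono hF_range
    hF_deriv hf_top hf_bot hf'_int c hc_def hc_pos
end

section
/- Let e_1,…,e_n be distinct real numbers with order statistics e_{(1)} < ⋯ < e_{(n)}, let k₀ ∈ {1,…,n}, and set τ = (k₀−1)/n. Define the check loss ρ_τ(u) = u·(τ − 1{u < 0}). Then for every b ∈ ℝ, Σ_{i=1}^n ρ_τ(e_i − b) ≥ Σ_{i=1}^n (τ − 1{i < k₀})·e_{(i)}, with equality at b = e_{(k₀)}. Consequently, min_{b∈ℝ} Σ_{i=1}^n ρ_τ(e_i − b) = Σ_{i=1}^n (τ − 1{i < k₀})·e_{(i)}. -/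
/-!
The check loss is the upper envelope of the lines `u ↦ u * (τ - c)`, `c ∈ [0, 1]`, with the
line `c = 1{u < 0}` touching it. Listing the residuals in increasing order and choosing
`c_i = 1{i < k₀}` gives, for every `b`, `Σ ρ_τ(e_(i) - b) ≥ Σ (τ - c_i) (e_(i) - b)`, and the
right-hand side does not depend on `b` because `τ = (k₀ - 1)/n` makes the weights `τ - c_i` sum
to zero. At `b = e_(k₀)` the chosen `c_i` are the touching ones, so the bound is attained.
-/

open Finset

/-- The quantile-regression check loss `ρ_τ(u) = u (τ - 1{u < 0})`. -/
noncomputable def checkLoss (τ u : ℝ) : ℝ := u * (τ - if u < 0 then 1 else 0)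

lemma mul_sub_le_checkLoss {τ c : ℝ} (u : ℝ) (hc₀ : 0 ≤ c) (hc₁ : c ≤ 1) :
    u * (τ - c) ≤ checkLoss τ u := by
  unfold checkLoss
  split_ifs with hu <;> nlinarith

lemma checkLoss_eq_mul_sub {τ c u : ℝ} (hneg : u < 0 → c = 1) (hpos : 0 < u → c = 0) :
    checkLoss τ u = u * (τ - c) := by
  unfold checkLoss
  rcases lt_trichotomy u 0 with hu | rfl | hu
  · simp [hu, hneg hu]
  · simp
  · simp [hu.not_gt, hpos hu]

section WeightedSum

variable {ι : Type*} [Fintype ι] {τ : ℝ} {x c : ι → ℝ}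

lemma sum_sub_mul_eq_of_sum_eq_zero (b : ℝ) (hsum : ∑ i, (τ - c i) = 0) :
    ∑ i, (x i - b) * (τ - c i) = ∑ i, (τ - c i) * x i := by
  calc ∑ i, (x i - b) * (τ - c i) = ∑ i, (τ - c i) * x i - b * ∑ i, (τ - c i) := by
        rw [mul_sum, ← sum_sub_distrib]
        exact sum_congr rfl fun i _ => by ring
    _ = ∑ i, (τ - c i) * x i := by rw [hsum, mul_zero, sub_zero]

lemma sum_mul_le_sum_checkLoss (b : ℝ) (hc : ∀ i, c i ∈ Set.Icc 0 1)
    (hsum : ∑ i, (τ - c i) = 0) :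
    ∑ i, (τ - c i) * x i ≤ ∑ i, checkLoss τ (x i - b) := by
  rw [← sum_sub_mul_eq_of_sum_eq_zero b hsum]
  exact sum_le_sum fun i _ => mul_sub_le_checkLoss _ (hc i).1 (hc i).2

lemma sum_checkLoss_eq_sum_mul {b : ℝ} (hneg : ∀ i, x i < b → c i = 1)
    (hpos : ∀ i, b < x i → c i = 0) (hsum : ∑ i, (τ - c i) = 0) :
    ∑ i, checkLoss τ (x i - b) = ∑ i, (τ - c i) * x i := by
  rw [← sum_sub_mul_eq_of_sum_eq_zero b hsum]
  exact sum_congr rfl fun i _ =>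
    checkLoss_eq_mul_sub (fun h => hneg i (sub_neg.1 h)) (fun h => hpos i (sub_pos.1 h))

end WeightedSum

lemma sum_quantileLevel_sub_indicator {n k₀ : ℕ} (hk₀ : 1 ≤ k₀) (hk₀n : k₀ ≤ n) :
    ∑ i : Fin n, (((k₀ : ℝ) - 1) / n - if (i : ℕ) + 1 < k₀ then 1 else 0) = 0 := by
  have hcard : #{i : Fin n | (i : ℕ) + 1 < k₀} = k₀ - 1 := by
    rw [filter_congr (q := fun i : Fin n => (i : ℕ) < k₀ - 1) fun i _ => by omega,
      Fin.card_filter_val_lt]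
    omega
  have hn : (n : ℝ) ≠ 0 := by norm_cast; omega
  rw [sum_sub_distrib, sum_boole, hcard, sum_const, card_univ, Fintype.card_fin, nsmul_eq_mul,
    Nat.cast_sub hk₀]
  field_simp
  push_cast
  ring

/-- Remark 4: profiling out the intercept in the quantile-regression check loss at
level `τ = (k₀−1)/n` yields the single-level rank regression objective
`Σᵢ (τ − 1{i < k₀}) e₍ᵢ₎`, with the minimum attained at `b = e₍k₀₎`. -/
theorem qr_profile_eq_srr {n : ℕ} (e : Fin n → ℝ)
    (k₀ : ℕ) (hk₀ : 1 ≤ k₀) (hk₀n : k₀ ≤ n) :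
    let τ : ℝ := ((k₀ : ℝ) - 1) / n
    let es : Fin n → ℝ := e ∘ Tuple.sort e
    let SRR : ℝ := ∑ i : Fin n, (τ - if (i : ℕ) + 1 < k₀ then 1 else 0) * es i
    (∀ b : ℝ,
        SRR ≤ ∑ i : Fin n, (e i - b) * (τ - if e i - b < 0 then 1 else 0)) ∧
    (∑ i : Fin n,
        (e i - es ⟨k₀ - 1, by omega⟩) *
          (τ - if e i - es ⟨k₀ - 1, by omega⟩ < 0 then 1 else 0) = SRR) ∧
    IsLeast
      {s : ℝ | ∃ b : ℝ,
        s = ∑ i : Fin n, (e i - b) * (τ - if e i - b < 0 then 1 else 0)} SRR := by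
  intro τ es SRR
  let m : Fin n := ⟨k₀ - 1, by omega⟩
  have hsum := sum_quantileLevel_sub_indicator hk₀ hk₀n
  have hsorted (b : ℝ) : ∑ i, checkLoss τ (e i - b) = ∑ i, checkLoss τ (es i - b) :=
    (Equiv.sum_comp (Tuple.sort e) fun j => checkLoss τ (e j - b)).symm
  have hlower (b : ℝ) : SRR ≤ ∑ i, checkLoss τ (e i - b) := by
    rw [hsorted]
    exact sum_mul_le_sum_checkLoss b (fun i => by split_ifs <;> simp) hsum
  have hattained : ∑ i, checkLoss τ (e i - es m) = SRR := by
    have hmono : Monotone es := Tuple.monotone_sort e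
    rw [hsorted]
    refine sum_checkLoss_eq_sum_mul (fun i hi => ?_) (fun i hi => ?_) hsum
    · have : (i : ℕ) < k₀ - 1 := hmono.reflect_lt hi
      exact if_pos (by omega)
    · have : k₀ - 1 < (i : ℕ) := hmono.reflect_lt hi
      exact if_neg (by omega)
  exact ⟨hlower, hattained, ⟨es m, hattained.symm⟩, by rintro s ⟨b, rfl⟩; exact hlower b⟩
end
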